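/- arXiv:2311.08800 — 5 statements merged into one kernel-verified Lean document; each statement's English description precedes it below -/
import Mathlib

section
/- For every z in the open unit disc 𝔻 ⊆ ℂ, the function f_z : 𝔻 → ℂ defined by f_z(w) = (1 - |z|²)·w / (1 - conj(z)·w) is holomorphic on 𝔻, satisfies f_z(0) = 0, its Bloch seminorm sup_{w ∈ 𝔻} (1 - |w|²)·|f_z'(w)| equals 1, and moreover (1 - |z|²)·f_z'(z) = 1. -/
open Complex Metric Set

/-- The Bloch seminorm of a map on the unit disc. -/
noncomputable def blochSeminorm {E : Type*} [NormedAddCommGroup E] [NormedSpace ℂ E]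
    (f : ℂ → E) : ℝ :=
  ⨆ z : ball (0 : ℂ) 1, (1 - ‖(z : ℂ)‖ ^ 2) * ‖deriv f (z : ℂ)‖

/-- The extremal Bloch function `f_z(w) = (1-|z|²)w / (1 - conj z · w)`. -/
noncomputable def fz (z : ℂ) : ℂ → ℂ :=
  fun w => ((1 - ‖z‖ ^ 2 : ℝ) : ℂ) * w / (1 - (starRingEnd ℂ) z * w)

open ComplexConjugate

/- For `|z|, |w| < 1` one has `|1 - z̄w|² = (1 - |z|²)(1 - |w|²) + |z - w|²`. Since
`f_z'(w) = (1 - |z|²) / (1 - z̄w)²`, this identity shows `(1 - |w|²)|f_z'(w)| ≤ 1`, with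
equality at `w = z`, where `1 - z̄z = 1 - |z|²`. -/

section BlochSeminorm

variable {E : Type*} [NormedAddCommGroup E] [NormedSpace ℂ E]

theorem blochSeminorm_eq_of_le_of_eq {f : ℂ → E} {C : ℝ}
    (hle : ∀ w ∈ ball (0 : ℂ) 1, (1 - ‖w‖ ^ 2) * ‖deriv f w‖ ≤ C)
    {z : ℂ} (hz : z ∈ ball (0 : ℂ) 1) (heq : (1 - ‖z‖ ^ 2) * ‖deriv f z‖ = C) :
    blochSeminorm f = C := by
  have hbdd : BddAbove (range fun w : ball (0 : ℂ) 1 => (1 - ‖(w : ℂ)‖ ^ 2) * ‖deriv f w‖) :=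
    ⟨C, forall_mem_range.2 fun w => hle w w.2⟩
  exact le_antisymm (ciSup_le fun w => hle w w.2) (heq ▸ le_ciSup hbdd ⟨z, hz⟩)

end BlochSeminorm

theorem norm_one_sub_conj_mul_sq (z w : ℂ) :
    ‖1 - conj z * w‖ ^ 2 = (1 - ‖z‖ ^ 2) * (1 - ‖w‖ ^ 2) + ‖z - w‖ ^ 2 := by
  simp only [← normSq_eq_norm_sq, normSq_apply, sub_re, sub_im, mul_re, mul_im, one_re, one_im,
    conj_re, conj_im]
  ring

theorem one_sub_conj_mul_ne_zero {z w : ℂ} (hz : ‖z‖ < 1) (hw : ‖w‖ < 1) :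
    1 - conj z * w ≠ 0 := by
  have hz' : 0 < 1 - ‖z‖ ^ 2 := by nlinarith [norm_nonneg z]
  have hw' : 0 < 1 - ‖w‖ ^ 2 := by nlinarith [norm_nonneg w]
  have hpos : 0 < ‖1 - conj z * w‖ ^ 2 := by rw [norm_one_sub_conj_mul_sq]; positivity
  exact fun h => by simp [h] at hpos

theorem one_sub_conj_mul_self (z : ℂ) : 1 - conj z * z = ((1 - ‖z‖ ^ 2 : ℝ) : ℂ) := by
  rw [conj_mul']
  push_cast
  ring

theorem hasDerivAt_fz (z : ℂ) {w : ℂ} (hw : 1 - conj z * w ≠ 0) :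
    HasDerivAt (fz z) (((1 - ‖z‖ ^ 2 : ℝ) : ℂ) / (1 - conj z * w) ^ 2) w := by
  have hnum : HasDerivAt (fun w => ((1 - ‖z‖ ^ 2 : ℝ) : ℂ) * w) ((1 - ‖z‖ ^ 2 : ℝ) : ℂ) w := by
    simpa only [mul_one] using (hasDerivAt_id' w).const_mul _
  have hden : HasDerivAt (fun w => 1 - conj z * w) (-conj z) w := by
    simpa using ((hasDerivAt_id w).const_mul (conj z)).const_sub 1
  exact (hnum.div hden hw).congr_deriv (by ring)

theorem one_sub_sq_mul_norm_deriv_fz {z w : ℂ} (hz : ‖z‖ < 1) (hw : ‖w‖ < 1) :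
    (1 - ‖w‖ ^ 2) * ‖deriv (fz z) w‖ = (1 - ‖z‖ ^ 2) * (1 - ‖w‖ ^ 2) / ‖1 - conj z * w‖ ^ 2 := by
  have hz' : 0 ≤ 1 - ‖z‖ ^ 2 := by nlinarith [norm_nonneg z]
  rw [(hasDerivAt_fz z (one_sub_conj_mul_ne_zero hz hw)).deriv, norm_div, norm_pow, norm_real,
    Real.norm_of_nonneg hz']
  ring

theorem one_sub_sq_mul_norm_deriv_fz_le_one {z w : ℂ} (hz : ‖z‖ < 1) (hw : ‖w‖ < 1) :
    (1 - ‖w‖ ^ 2) * ‖deriv (fz z) w‖ ≤ 1 := by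
  rw [one_sub_sq_mul_norm_deriv_fz hz hw, div_le_one (pow_pos (norm_pos_iff.2
    (one_sub_conj_mul_ne_zero hz hw)) 2), norm_one_sub_conj_mul_sq]
  exact le_add_of_nonneg_right (sq_nonneg _)

theorem stmt0 (z : ℂ) (hz : z ∈ ball (0 : ℂ) 1) :
    DifferentiableOn ℂ (fz z) (ball (0 : ℂ) 1) ∧
    fz z 0 = 0 ∧
    blochSeminorm (fz z) = 1 ∧
    ((1 - ‖z‖ ^ 2 : ℝ) : ℂ) * deriv (fz z) z = 1 := by
  have hz₁ : ‖z‖ < 1 := mem_ball_zero_iff.1 hz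
  have hz' : (1 - ‖z‖ ^ 2 : ℝ) ≠ 0 := by nlinarith [norm_nonneg z]
  have hderiv_z : deriv (fz z) z = ((1 - ‖z‖ ^ 2 : ℝ) : ℂ)⁻¹ := by
    rw [(hasDerivAt_fz z (one_sub_conj_mul_ne_zero hz₁ hz₁)).deriv, one_sub_conj_mul_self]
    field_simp
  refine ⟨fun w hw => ?_, by simp [fz], ?_, ?_⟩
  · have hw₁ : ‖w‖ < 1 := mem_ball_zero_iff.1 hw
    exact (hasDerivAt_fz z (one_sub_conj_mul_ne_zero hz₁ hw₁)).differentiableAt.differentiableWithinAt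
  · refine blochSeminorm_eq_of_le_of_eq
      (fun w hw => one_sub_sq_mul_norm_deriv_fz_le_one hz₁ (mem_ball_zero_iff.1 hw)) hz ?_
    rw [one_sub_sq_mul_norm_deriv_fz hz₁ hz₁, one_sub_conj_mul_self, norm_real, Real.norm_eq_abs,
      sq_abs, ← sq, div_self (pow_ne_zero 2 hz')]
  · rw [hderiv_z, mul_inv_cancel₀ (ofReal_ne_zero.2 hz')]
end

section
/- Let H be a complex Hilbert space with orthonormal basis (v_α)_{α ∈ A}, let g : 𝔻 → H be holomorphic with g(0) = 0 and finite Bloch seminorm, and let n, m ∈ ℕ, λ_1,…,λ_n ∈ ℂ, z_1,…,z_n ∈ 𝔻, μ_1,…,μ_m ∈ ℂ, w_1,…,w_m ∈ 𝔻. If for every holomorphic h : 𝔻 → ℂ with h(0) = 0 and finite Bloch seminorm one has ∑_{i=1}^n |λ_i|²|h'(z_i)|² ≤ ∑_{j=1}^m |μ_j|²|h'(w_j)|², then ∑_{i=1}^n |λ_i|²‖g'(z_i)‖² ≤ ∑_{j=1}^m |μ_j|²‖g'(w_j)‖². -/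
/-!
Pair the Hilbert-space valued function `g` with a basis vector `b α`: the coordinate
`z ↦ ⟪b α, g z⟫` is a scalar Bloch function vanishing at `0` whose derivative is the `α`-th
coordinate of `g'`, so the hypothesis applies to it. Summing the resulting inequalities over `α`
and using Parseval's identity `‖x‖² = ∑ α, |⟪b α, x⟫|²` gives the inequality for `g`.
-/

open Complex Metric Set

section Parseval

variable {ι 𝕜 E : Type*} [RCLike 𝕜] [NormedAddCommGroup E] [InnerProductSpace 𝕜 E]

theorem HilbertBasis.hasSum_norm_inner_sq (b : HilbertBasis ι 𝕜 E) (x : E) :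
    HasSum (fun i => ‖(inner 𝕜 (b i) x : 𝕜)‖ ^ 2) (‖x‖ ^ 2) := by
  have h := lp.hasSum_norm (p := 2) (by norm_num) (b.repr x)
  simp only [ENNReal.toReal_ofNat, Real.rpow_ofNat, b.repr_apply_apply,
    LinearIsometryEquiv.norm_map] at h
  exact h

theorem HilbertBasis.sum_mul_norm_sq_le_of_forall_inner {κ κ' : Type*} [Fintype κ] [Fintype κ']
    (b : HilbertBasis ι 𝕜 E) (c : κ → ℝ) (x : κ → E) (d : κ' → ℝ) (y : κ' → E)
    (h : ∀ i, ∑ k, c k * ‖(inner 𝕜 (b i) (x k) : 𝕜)‖ ^ 2 ≤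
      ∑ k, d k * ‖(inner 𝕜 (b i) (y k) : 𝕜)‖ ^ 2) :
    ∑ k, c k * ‖x k‖ ^ 2 ≤ ∑ k, d k * ‖y k‖ ^ 2 :=
  hasSum_le h (hasSum_sum fun k _ => (b.hasSum_norm_inner_sq (x k)).mul_left (c k))
    (hasSum_sum fun k _ => (b.hasSum_norm_inner_sq (y k)).mul_left (d k))

end Parseval

section Bloch

variable {E F : Type*} [NormedAddCommGroup E] [NormedSpace ℂ E]
  [NormedAddCommGroup F] [NormedSpace ℂ F]

def BlochBounded (f : ℂ → E) : Prop :=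
  ∃ M, ∀ z ∈ ball (0 : ℂ) 1, (1 - ‖z‖ ^ 2) * ‖deriv f z‖ ≤ M

theorem ContinuousLinearMap.deriv_comp {f : ℂ → E} {z : ℂ} (L : E →L[ℂ] F) (hf : DifferentiableAt ℂ f z) :
    deriv (fun w => L (f w)) z = L (deriv f z) :=
  (L.hasFDerivAt.comp_hasDerivAt z hf.hasDerivAt).deriv

theorem BlochBounded.clm_comp {f : ℂ → E} (hf : DifferentiableOn ℂ f (ball 0 1))
    (hB : BlochBounded f) (L : E →L[ℂ] F) : BlochBounded fun z => L (f z) := by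
  obtain ⟨M, hM⟩ := hB
  refine ⟨‖L‖ * M, fun z hz => ?_⟩
  have hweight : 0 ≤ 1 - ‖z‖ ^ 2 := by
    have : ‖z‖ < 1 := mem_ball_zero_iff.mp hz
    nlinarith [norm_nonneg z]
  rw [L.deriv_comp (hf.differentiableAt (isOpen_ball.mem_nhds hz))]
  calc (1 - ‖z‖ ^ 2) * ‖L (deriv f z)‖ ≤ (1 - ‖z‖ ^ 2) * (‖L‖ * ‖deriv f z‖) := by
        gcongr; exact L.le_opNorm _
    _ = ‖L‖ * ((1 - ‖z‖ ^ 2) * ‖deriv f z‖) := by ring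
    _ ≤ ‖L‖ * M := by gcongr; exact hM z hz

end Bloch

theorem stmt3 {A : Type*} {H : Type*} [NormedAddCommGroup H] [InnerProductSpace ℂ H]
    [CompleteSpace H] (b : HilbertBasis A ℂ H)
    (g : ℂ → H) (hg : DifferentiableOn ℂ g (ball (0 : ℂ) 1)) (hg0 : g 0 = 0)
    (hgb : ∃ M, ∀ z ∈ ball (0 : ℂ) 1, (1 - ‖z‖ ^ 2) * ‖deriv g z‖ ≤ M)
    (n m : ℕ) (lam : Fin n → ℂ) (zs : Fin n → ℂ) (hzs : ∀ i, zs i ∈ ball (0 : ℂ) 1)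
    (mu : Fin m → ℂ) (ws : Fin m → ℂ) (hws : ∀ j, ws j ∈ ball (0 : ℂ) 1)
    (hdom : ∀ h : ℂ → ℂ, DifferentiableOn ℂ h (ball (0 : ℂ) 1) → h 0 = 0 →
      (∃ M, ∀ z ∈ ball (0 : ℂ) 1, (1 - ‖z‖ ^ 2) * ‖deriv h z‖ ≤ M) →
      ∑ i, ‖lam i‖ ^ 2 * ‖deriv h (zs i)‖ ^ 2 ≤ ∑ j, ‖mu j‖ ^ 2 * ‖deriv h (ws j)‖ ^ 2) :
    ∑ i, ‖lam i‖ ^ 2 * ‖deriv g (zs i)‖ ^ 2 ≤ ∑ j, ‖mu j‖ ^ 2 * ‖deriv g (ws j)‖ ^ 2 := by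
  refine b.sum_mul_norm_sq_le_of_forall_inner _ _ _ _ fun α => ?_
  have hcoord := hdom (fun z => innerSL ℂ (b α) (g z))
    ((innerSL ℂ (b α)).differentiable.comp_differentiableOn hg) (by simp [hg0])
    (BlochBounded.clm_comp hg hgb _)
  have hderiv : ∀ z ∈ ball (0 : ℂ) 1,
      deriv (fun w => innerSL ℂ (b α) (g w)) z = inner ℂ (b α) (deriv g z) := fun z hz =>
    (innerSL ℂ (b α)).deriv_comp (hg.differentiableAt (isOpen_ball.mem_nhds hz))
  simpa only [hderiv _ (hzs _), hderiv _ (hws _)] using hcoord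
end

section
/- Let n, m ∈ ℕ, λ_1,…,λ_n ∈ ℂ, z_1,…,z_n ∈ 𝔻, μ_1,…,μ_m ∈ ℂ, w_1,…,w_m ∈ 𝔻, and suppose that for every holomorphic g : 𝔻 → ℂ with g(0) = 0 and finite Bloch seminorm, ∑_{i=1}^n |λ_i|²|g'(z_i)|² ≤ ∑_{j=1}^m |μ_j|²|g'(w_j)|². Then there exists an n × m complex matrix (a_{ij}) defining a linear map ℂ^m → ℂ^n of Euclidean operator norm at most 1 such that λ_i g'(z_i) = ∑_{j=1}^m a_{ij} μ_j g'(w_j) for every such g and every 1 ≤ i ≤ n. -/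
open Complex Metric Set

/-!
The hypothesis says that `(μ_j g'(w_j))_j ↦ (λ_i g'(z_i))_i` is a well-defined contraction
from the subspace `{(μ_j g'(w_j))_j : g Bloch}` of `ℂ^m` to `ℂ^n`, since Bloch functions form a
vector space. In a Hilbert space the extension of such a contraction to the whole space is
immediate: precompose with the orthogonal projection onto the subspace. The matrix of the
extension is `a`.
-/

theorem LinearMap.exists_comp_rangeRestrict_eq_of_norm_le {R V E F : Type*} [Ring R]
    [AddCommGroup V] [Module R V] [SeminormedAddCommGroup E] [Module R E]
    [NormedAddCommGroup F] [Module R F] (v : V →ₗ[R] E) (u : V →ₗ[R] F)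
    (huv : ∀ x, ‖u x‖ ≤ ‖v x‖) :
    ∃ T : LinearMap.range v →ₗ[R] F, ∀ x, T (v.rangeRestrict x) = u x := by
  have hker : LinearMap.ker v ≤ LinearMap.ker u := fun x hx ↦ by
    simpa [LinearMap.mem_ker.mp hx] using huv x
  refine ⟨(LinearMap.ker v).liftQ u hker ∘ₗ v.quotKerEquivRange.symm.toLinearMap, fun x ↦ ?_⟩
  have : v.quotKerEquivRange.symm (v.rangeRestrict x) = Submodule.Quotient.mk x :=
    v.quotKerEquivRange.symm_apply_eq.mpr rfl
  simp [this]

theorem LinearMap.exists_contraction_comp_eq {𝕜 V E F : Type*} [RCLike 𝕜] [AddCommGroup V]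
    [Module 𝕜 V] [NormedAddCommGroup E] [InnerProductSpace 𝕜 E] [NormedAddCommGroup F]
    [NormedSpace 𝕜 F] (v : V →ₗ[𝕜] E) (u : V →ₗ[𝕜] F)
    [(LinearMap.range v).HasOrthogonalProjection] (huv : ∀ x, ‖u x‖ ≤ ‖v x‖) :
    ∃ L : E →L[𝕜] F, ‖L‖ ≤ 1 ∧ ∀ x, L (v x) = u x := by
  obtain ⟨T, hT⟩ := v.exists_comp_rangeRestrict_eq_of_norm_le u huv
  have hTle : ∀ y, ‖T y‖ ≤ 1 * ‖y‖ := by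
    rintro ⟨_, x, rfl⟩
    simpa using (hT x).symm ▸ huv x
  let P := (LinearMap.range v).orthogonalProjectionOnto
  refine ⟨(T.mkContinuous 1 hTle).comp P, ?_, fun x ↦ ?_⟩
  · calc ‖(T.mkContinuous 1 hTle).comp P‖ ≤ ‖T.mkContinuous 1 hTle‖ * ‖P‖ :=
          ContinuousLinearMap.opNorm_comp_le _ _
      _ ≤ 1 := mul_le_one₀ (T.mkContinuous_norm_le zero_le_one hTle) (norm_nonneg P)
          (LinearMap.range v).orthogonalProjectionOnto_norm_le
  · have : P (v x) = v.rangeRestrict x :=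
      Submodule.orthogonalProjectionOnto_mem_subspace_eq_self (v.rangeRestrict x)
    simp [this, hT]

theorem EuclideanSpace.exists_matrix_apply_eq {𝕜 ι κ : Type*} [RCLike 𝕜] [Fintype ι]
    [DecidableEq ι] (L : EuclideanSpace 𝕜 ι →ₗ[𝕜] EuclideanSpace 𝕜 κ) :
    ∃ a : Matrix κ ι 𝕜, ∀ (t : ι → 𝕜) i, L (WithLp.toLp 2 t) i = ∑ j, a i j * t j := by
  obtain ⟨a, rfl⟩ := (Matrix.toLpLin 2 2).surjective L
  exact ⟨a, fun _ _ ↦ rfl⟩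

lemma one_sub_norm_sq_nonneg_of_mem_ball {E : Type*} [SeminormedAddCommGroup E] {z : E}
    (hz : z ∈ ball (0 : E) 1) : 0 ≤ 1 - ‖z‖ ^ 2 := by
  have : ‖z‖ < 1 := mem_ball_zero_iff.mp hz
  nlinarith [norm_nonneg z]

lemma deriv_add_of_differentiableOn_of_isOpen {𝕜 F : Type*} [NontriviallyNormedField 𝕜]
    [NormedAddCommGroup F] [NormedSpace 𝕜 F] {f g : 𝕜 → F} {U : Set 𝕜} {z : 𝕜}
    (hf : DifferentiableOn 𝕜 f U) (hg : DifferentiableOn 𝕜 g U) (hU : IsOpen U) (hz : z ∈ U) :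
    deriv (f + g) z = deriv f z + deriv g z :=
  deriv_add (hf.differentiableAt (hU.mem_nhds hz)) (hg.differentiableAt (hU.mem_nhds hz))

def blochSpace : Submodule ℂ (ℂ → ℂ) where
  carrier := {g | DifferentiableOn ℂ g (ball 0 1) ∧ g 0 = 0 ∧
    ∃ M, ∀ z ∈ ball (0 : ℂ) 1, (1 - ‖z‖ ^ 2) * ‖deriv g z‖ ≤ M}
  zero_mem' := ⟨differentiableOn_const 0, rfl, 0, fun z _ ↦ by simp⟩
  add_mem' := by
    rintro f g ⟨hfd, hf0, Mf, hMf⟩ ⟨hgd, hg0, Mg, hMg⟩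
    refine ⟨hfd.add hgd, by simp [hf0, hg0], Mf + Mg, fun z hz ↦ ?_⟩
    calc (1 - ‖z‖ ^ 2) * ‖deriv (f + g) z‖
        ≤ (1 - ‖z‖ ^ 2) * ‖deriv f z‖ + (1 - ‖z‖ ^ 2) * ‖deriv g z‖ := by
          rw [deriv_add_of_differentiableOn_of_isOpen hfd hgd isOpen_ball hz, ← mul_add]
          exact mul_le_mul_of_nonneg_left (norm_add_le _ _) (one_sub_norm_sq_nonneg_of_mem_ball hz)
      _ ≤ Mf + Mg := add_le_add (hMf z hz) (hMg z hz)
  smul_mem' := by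
    rintro c g ⟨hgd, hg0, M, hM⟩
    refine ⟨hgd.const_smul c, by simp [hg0], ‖c‖ * M, fun z hz ↦ ?_⟩
    calc (1 - ‖z‖ ^ 2) * ‖deriv (fun y ↦ c * g y) z‖ = ‖c‖ * ((1 - ‖z‖ ^ 2) * ‖deriv g z‖) := by
          rw [deriv_const_mul_field, norm_mul]; ring
      _ ≤ ‖c‖ * M := mul_le_mul_of_nonneg_left (hM z hz) (norm_nonneg c)

namespace blochSpace

noncomputable def derivAt (z : ℂ) (hz : z ∈ ball (0 : ℂ) 1) : blochSpace →ₗ[ℂ] ℂ where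
  toFun g := deriv (g : ℂ → ℂ) z
  map_add' f g := deriv_add_of_differentiableOn_of_isOpen f.2.1 g.2.1 isOpen_ball hz
  map_smul' c _ := deriv_const_mul_field c

noncomputable def weightedDerivs {k : ℕ} (c p : Fin k → ℂ) (hp : ∀ j, p j ∈ ball (0 : ℂ) 1) :
    blochSpace →ₗ[ℂ] EuclideanSpace ℂ (Fin k) :=
  (WithLp.linearEquiv 2 ℂ (Fin k → ℂ)).symm.toLinearMap ∘ₗ
    LinearMap.pi fun j ↦ c j • derivAt (p j) (hp j)

lemma weightedDerivs_apply {k : ℕ} (c p : Fin k → ℂ) (hp : ∀ j, p j ∈ ball (0 : ℂ) 1)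
    (g : blochSpace) (j : Fin k) : weightedDerivs c p hp g j = c j * deriv (g : ℂ → ℂ) (p j) := rfl

lemma norm_weightedDerivs_sq {k : ℕ} (c p : Fin k → ℂ) (hp : ∀ j, p j ∈ ball (0 : ℂ) 1)
    (g : blochSpace) :
    ‖weightedDerivs c p hp g‖ ^ 2 = ∑ j, ‖c j‖ ^ 2 * ‖deriv (g : ℂ → ℂ) (p j)‖ ^ 2 := by
  simp only [EuclideanSpace.norm_sq_eq, weightedDerivs_apply, norm_mul, mul_pow]

end blochSpace

theorem stmt6 (n m : ℕ) (lam : Fin n → ℂ) (zs : Fin n → ℂ) (hzs : ∀ i, zs i ∈ ball (0 : ℂ) 1)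
    (mu : Fin m → ℂ) (ws : Fin m → ℂ) (hws : ∀ j, ws j ∈ ball (0 : ℂ) 1)
    (hdom : ∀ g : ℂ → ℂ, DifferentiableOn ℂ g (ball (0 : ℂ) 1) → g 0 = 0 →
      (∃ M, ∀ z ∈ ball (0 : ℂ) 1, (1 - ‖z‖ ^ 2) * ‖deriv g z‖ ≤ M) →
      ∑ i, ‖lam i‖ ^ 2 * ‖deriv g (zs i)‖ ^ 2 ≤ ∑ j, ‖mu j‖ ^ 2 * ‖deriv g (ws j)‖ ^ 2) :
    ∃ a : Matrix (Fin n) (Fin m) ℂ,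
      (∀ t : Fin m → ℂ, ∑ i, ‖∑ j, a i j * t j‖ ^ 2 ≤ ∑ j, ‖t j‖ ^ 2) ∧
      ∀ g : ℂ → ℂ, DifferentiableOn ℂ g (ball (0 : ℂ) 1) → g 0 = 0 →
        (∃ M, ∀ z ∈ ball (0 : ℂ) 1, (1 - ‖z‖ ^ 2) * ‖deriv g z‖ ≤ M) →
        ∀ i, lam i * deriv g (zs i) = ∑ j, a i j * (mu j * deriv g (ws j)) := by
  let v := blochSpace.weightedDerivs mu ws hws
  let u := blochSpace.weightedDerivs lam zs hzs
  have huv : ∀ g, ‖u g‖ ≤ ‖v g‖ := fun g ↦ by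
    rw [← sq_le_sq₀ (norm_nonneg _) (norm_nonneg _), blochSpace.norm_weightedDerivs_sq,
      blochSpace.norm_weightedDerivs_sq]
    exact hdom g g.2.1 g.2.2.1 g.2.2.2
  obtain ⟨L, hL, hLvu⟩ := v.exists_contraction_comp_eq u huv
  obtain ⟨a, ha⟩ := EuclideanSpace.exists_matrix_apply_eq L.toLinearMap
  refine ⟨a, fun t ↦ ?_, fun g hgd hg0 hgM i ↦ ?_⟩
  · calc ∑ i, ‖∑ j, a i j * t j‖ ^ 2 = ‖L (WithLp.toLp 2 t)‖ ^ 2 := by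
          simp only [EuclideanSpace.norm_sq_eq, ← ha, ContinuousLinearMap.coe_coe]
      _ ≤ ‖WithLp.toLp 2 t‖ ^ 2 := by
          gcongr
          simpa using L.le_of_opNorm_le hL _
      _ = ∑ j, ‖t j‖ ^ 2 := EuclideanSpace.norm_sq_eq _
  · calc lam i * deriv g (zs i) = L (v ⟨g, hgd, hg0, hgM⟩) i := by rw [hLvu]; rfl
      _ = ∑ j, a i j * (mu j * deriv g (ws j)) := ha _ i
end

section
/- Let X be a complex Banach space, let n ∈ ℕ, λ_1,…,λ_n ∈ ℂ, z_1,…,z_n ∈ 𝔻, x_1,…,x_n ∈ X, and suppose (λ_i, z_i)_{i=1}^n is Bloch dominated by (μ_j, w_j)_{j=1}^m, i.e. ∑_i |λ_i|²|g'(z_i)|² ≤ ∑_j |μ_j|²|g'(w_j)|² for all normalized Bloch g. Then for every normalized Bloch g : 𝔻 → ℂ with ρ_B(g) ≤ 1 and every x* ∈ X* with ‖x*‖ ≤ 1: |∑_{i=1}^n λ_i g'(z_i) x*(x_i)| ≤ (∑_{i=1}^n ‖x_i‖²)^{1/2} · (∑_{j=1}^m |μ_j|²/(1 - |w_j|²)²)^{1/2}.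 -/
open Complex Metric Set

theorem stmt15 {X : Type*} [NormedAddCommGroup X] [NormedSpace ℂ X]
    (n m : ℕ) (lam : Fin n → ℂ) (zs : Fin n → ℂ) (hzs : ∀ i, zs i ∈ ball (0 : ℂ) 1)
    (x : Fin n → X)
    (mu : Fin m → ℂ) (ws : Fin m → ℂ) (hws : ∀ j, ws j ∈ ball (0 : ℂ) 1)
    (hdom : ∀ g : ℂ → ℂ, DifferentiableOn ℂ g (ball (0 : ℂ) 1) → g 0 = 0 →
      (∃ M, ∀ z ∈ ball (0 : ℂ) 1, (1 - ‖z‖ ^ 2) * ‖deriv g z‖ ≤ M) →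
      ∑ i, ‖lam i‖ ^ 2 * ‖deriv g (zs i)‖ ^ 2 ≤ ∑ j, ‖mu j‖ ^ 2 * ‖deriv g (ws j)‖ ^ 2) :
    ∀ g : ℂ → ℂ, DifferentiableOn ℂ g (ball (0 : ℂ) 1) → g 0 = 0 →
      (∀ z ∈ ball (0 : ℂ) 1, (1 - ‖z‖ ^ 2) * ‖deriv g z‖ ≤ 1) →
      ∀ x' : X →L[ℂ] ℂ, ‖x'‖ ≤ 1 →
      ‖∑ i, lam i * deriv g (zs i) * x' (x i)‖ ≤
        Real.sqrt (∑ i, ‖x i‖ ^ 2) *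
          Real.sqrt (∑ j, ‖mu j‖ ^ 2 / (1 - ‖ws j‖ ^ 2) ^ 2) := by
  intro g hg hg0 hb x' hx'
  -- Step 1: domination
  have h1 : ∑ i, ‖lam i‖ ^ 2 * ‖deriv g (zs i)‖ ^ 2 ≤
      ∑ j, ‖mu j‖ ^ 2 * ‖deriv g (ws j)‖ ^ 2 :=
    hdom g hg hg0 ⟨1, hb⟩
  -- Step 2: termwise bound
  have h2 : ∑ j, ‖mu j‖ ^ 2 * ‖deriv g (ws j)‖ ^ 2 ≤
      ∑ j, ‖mu j‖ ^ 2 / (1 - ‖ws j‖ ^ 2) ^ 2 := by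
    apply Finset.sum_le_sum
    intro j _
    have hwj := hws j
    have hnorm : ‖ws j‖ < 1 := by simpa using hwj
    have hpos : (0 : ℝ) < 1 - ‖ws j‖ ^ 2 := by nlinarith [norm_nonneg (ws j)]
    have hb' := hb (ws j) hwj
    have hd : ‖deriv g (ws j)‖ ≤ 1 / (1 - ‖ws j‖ ^ 2) := by
      rw [le_div_iff₀ hpos]; linarith [hb']
    have hd2 : ‖deriv g (ws j)‖ ^ 2 ≤ 1 / (1 - ‖ws j‖ ^ 2) ^ 2 := by
      have := pow_le_pow_left₀ (norm_nonneg _) hd 2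
      calc ‖deriv g (ws j)‖ ^ 2 ≤ (1 / (1 - ‖ws j‖ ^ 2)) ^ 2 := this
        _ = 1 / (1 - ‖ws j‖ ^ 2) ^ 2 := by rw [div_pow, one_pow]
    calc ‖mu j‖ ^ 2 * ‖deriv g (ws j)‖ ^ 2
        ≤ ‖mu j‖ ^ 2 * (1 / (1 - ‖ws j‖ ^ 2) ^ 2) := by
          exact mul_le_mul_of_nonneg_left hd2 (by positivity)
      _ = ‖mu j‖ ^ 2 / (1 - ‖ws j‖ ^ 2) ^ 2 := by ring
  -- Step 3: x' bound
  have h3 : ∀ i, ‖x' (x i)‖ ≤ ‖x i‖ := by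
    intro i
    calc ‖x' (x i)‖ ≤ ‖x'‖ * ‖x i‖ := x'.le_opNorm _
      _ ≤ 1 * ‖x i‖ := mul_le_mul_of_nonneg_right hx' (norm_nonneg _)
      _ = ‖x i‖ := one_mul _
  -- Cauchy–Schwarz
  have hcs : (∑ i, ‖lam i * deriv g (zs i)‖ * ‖x' (x i)‖) ^ 2 ≤
      (∑ i, ‖lam i * deriv g (zs i)‖ ^ 2) * (∑ i, ‖x' (x i)‖ ^ 2) :=
    Finset.sum_mul_sq_le_sq_mul_sq Finset.univ _ _
  have hsumnn : (0:ℝ) ≤ ∑ i, ‖lam i * deriv g (zs i)‖ * ‖x' (x i)‖ :=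
    Finset.sum_nonneg fun i _ => mul_nonneg (norm_nonneg _) (norm_nonneg _)
  have hcs' : ∑ i, ‖lam i * deriv g (zs i)‖ * ‖x' (x i)‖ ≤
      Real.sqrt (∑ i, ‖lam i * deriv g (zs i)‖ ^ 2) * Real.sqrt (∑ i, ‖x' (x i)‖ ^ 2) := by
    rw [← Real.sqrt_mul (Finset.sum_nonneg fun i _ => by positivity)]
    exact (Real.le_sqrt hsumnn (by positivity)).mpr hcs
  have hA : ∑ i, ‖lam i * deriv g (zs i)‖ ^ 2 = ∑ i, ‖lam i‖ ^ 2 * ‖deriv g (zs i)‖ ^ 2 := by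
    apply Finset.sum_congr rfl; intro i _; rw [norm_mul, mul_pow]
  have hBsum : ∑ i, ‖x' (x i)‖ ^ 2 ≤ ∑ i, ‖x i‖ ^ 2 :=
    Finset.sum_le_sum fun i _ => pow_le_pow_left₀ (norm_nonneg _) (h3 i) 2
  calc ‖∑ i, lam i * deriv g (zs i) * x' (x i)‖
      ≤ ∑ i, ‖lam i * deriv g (zs i)‖ * ‖x' (x i)‖ := by
        refine (norm_sum_le _ _).trans (Finset.sum_le_sum fun i _ => ?_)
        rw [← norm_mul]
    _ ≤ Real.sqrt (∑ i, ‖lam i * deriv g (zs i)‖ ^ 2) * Real.sqrt (∑ i, ‖x' (x i)‖ ^ 2) := hcs'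
    _ ≤ Real.sqrt (∑ j, ‖mu j‖ ^ 2 / (1 - ‖ws j‖ ^ 2) ^ 2) * Real.sqrt (∑ i, ‖x i‖ ^ 2) := by
        apply mul_le_mul
        · exact Real.sqrt_le_sqrt (by rw [hA]; exact h1.trans h2)
        · exact Real.sqrt_le_sqrt hBsum
        · exact Real.sqrt_nonneg _
        · exact Real.sqrt_nonneg _
    _ = Real.sqrt (∑ i, ‖x i‖ ^ 2) * Real.sqrt (∑ j, ‖mu j‖ ^ 2 / (1 - ‖ws j‖ ^ 2) ^ 2) :=
        mul_comm _ _
end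

section
/- Let X be a complex Banach space and f : 𝔻 → X holomorphic with f(0) = 0 such that there exist a complex Hilbert space H, a holomorphic g : 𝔻 → H with g(0) = 0 and ρ_B(g) < ∞, and a bounded linear T : H → X with f = T ∘ g. Then for all n, m ∈ ℕ, λ_i ∈ ℂ, z_i ∈ 𝔻 (1 ≤ i ≤ n), μ_j ∈ ℂ, w_j ∈ 𝔻 (1 ≤ j ≤ m) with (λ_i, z_i) ≺ (μ_j, w_j): ∑_{i=1}^n |λ_i|²‖f'(z_i)‖² ≤ ‖T‖²·ρ_B(g)² · ∑_{j=1}^m |μ_j|²/(1 - |w_j|²)². -/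
/-! For a unit vector `e`, the scalar function `⟪e, g⟫` vanishes at `0` and is Bloch, so the
domination applies to it. Summing these inequalities over an orthonormal basis of the
(finite-dimensional) span of the `g'(z_i)`, `g'(w_j)` gives, by Parseval, the domination
inequality for `g` itself. It remains to use `‖f'‖ ≤ ‖T‖ ‖g'‖` on the left and
`‖g'(w)‖ ≤ ρ_B(g) / (1 - |w|²)` on the right. -/

open Complex Metric Set

def IsBlochBounded {E : Type*} [NormedAddCommGroup E] [NormedSpace ℂ E] (g : ℂ → E) : Prop :=
  ∃ M, ∀ z ∈ ball (0 : ℂ) 1, (1 - ‖z‖ ^ 2) * ‖deriv g z‖ ≤ M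

def BlochDominated {n m : ℕ} (lam zs : Fin n → ℂ) (mu ws : Fin m → ℂ) : Prop :=
  ∀ h : ℂ → ℂ, DifferentiableOn ℂ h (ball (0 : ℂ) 1) → h 0 = 0 → IsBlochBounded h →
    ∑ i, ‖lam i‖ ^ 2 * ‖deriv h (zs i)‖ ^ 2 ≤ ∑ j, ‖mu j‖ ^ 2 * ‖deriv h (ws j)‖ ^ 2

lemma one_sub_norm_sq_pos_of_mem_ball {z : ℂ} (hz : z ∈ ball (0 : ℂ) 1) :
    0 < 1 - ‖z‖ ^ 2 := by
  rw [mem_ball_zero_iff] at hz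
  nlinarith [norm_nonneg z]

section BlochBounded

variable {E F : Type*} [NormedAddCommGroup E] [NormedSpace ℂ E]
  [NormedAddCommGroup F] [NormedSpace ℂ F]

lemma deriv_clm_comp_apply (L : E →L[ℂ] F) {g : ℂ → E} {z : ℂ} (hg : DifferentiableAt ℂ g z) :
    deriv (fun w => L (g w)) z = L (deriv g z) :=
  (L.hasFDerivAt.comp_hasDerivAt z hg.hasDerivAt).deriv

lemma IsBlochBounded.clm_comp {g : ℂ → E} (hg : DifferentiableOn ℂ g (ball (0 : ℂ) 1))
    (hgb : IsBlochBounded g) (L : E →L[ℂ] F) : IsBlochBounded fun w => L (g w) := by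
  obtain ⟨M, hM⟩ := hgb
  refine ⟨‖L‖ * M, fun z hz => ?_⟩
  rw [deriv_clm_comp_apply L (hg.differentiableAt (isOpen_ball.mem_nhds hz))]
  calc (1 - ‖z‖ ^ 2) * ‖L (deriv g z)‖
      ≤ (1 - ‖z‖ ^ 2) * (‖L‖ * ‖deriv g z‖) :=
        mul_le_mul_of_nonneg_left (L.le_opNorm _) (one_sub_norm_sq_pos_of_mem_ball hz).le
    _ = ‖L‖ * ((1 - ‖z‖ ^ 2) * ‖deriv g z‖) := by ring
    _ ≤ ‖L‖ * M := mul_le_mul_of_nonneg_left (hM z hz) (norm_nonneg L)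

lemma IsBlochBounded.le_blochSeminorm {g : ℂ → E} (hgb : IsBlochBounded g) {z : ℂ}
    (hz : z ∈ ball (0 : ℂ) 1) : (1 - ‖z‖ ^ 2) * ‖deriv g z‖ ≤ blochSeminorm g := by
  obtain ⟨M, hM⟩ := hgb
  exact le_ciSup (f := fun w : ball (0 : ℂ) 1 => (1 - ‖(w : ℂ)‖ ^ 2) * ‖deriv g (w : ℂ)‖)
    ⟨M, by rintro _ ⟨w, rfl⟩; exact hM w w.2⟩ ⟨z, hz⟩

lemma IsBlochBounded.sq_norm_deriv_le {g : ℂ → E} (hgb : IsBlochBounded g) {z : ℂ}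
    (hz : z ∈ ball (0 : ℂ) 1) :
    ‖deriv g z‖ ^ 2 ≤ blochSeminorm g ^ 2 / (1 - ‖z‖ ^ 2) ^ 2 := by
  have hpos := one_sub_norm_sq_pos_of_mem_ball hz
  rw [← div_pow]
  refine pow_le_pow_left₀ (norm_nonneg _) ?_ 2
  rw [le_div_iff₀ hpos, mul_comm]
  exact hgb.le_blochSeminorm hz

lemma IsBlochBounded.sum_mul_sq_norm_deriv_le {m : ℕ} {g : ℂ → E} (hgb : IsBlochBounded g)
    (mu ws : Fin m → ℂ) (hws : ∀ j, ws j ∈ ball (0 : ℂ) 1) :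
    ∑ j, ‖mu j‖ ^ 2 * ‖deriv g (ws j)‖ ^ 2 ≤
      blochSeminorm g ^ 2 * ∑ j, ‖mu j‖ ^ 2 / (1 - ‖ws j‖ ^ 2) ^ 2 := by
  rw [Finset.mul_sum]
  refine Finset.sum_le_sum fun j _ => ?_
  calc ‖mu j‖ ^ 2 * ‖deriv g (ws j)‖ ^ 2
      ≤ ‖mu j‖ ^ 2 * (blochSeminorm g ^ 2 / (1 - ‖ws j‖ ^ 2) ^ 2) := by
        gcongr; exact hgb.sq_norm_deriv_le (hws j)
    _ = blochSeminorm g ^ 2 * (‖mu j‖ ^ 2 / (1 - ‖ws j‖ ^ 2) ^ 2) := by ring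

lemma ContinuousLinearMap.sum_mul_sq_norm_apply_le {ι : Type*} [Fintype ι] (L : E →L[ℂ] F)
    {c : ι → ℝ} (hc : ∀ i, 0 ≤ c i) (v : ι → E) :
    ∑ i, c i * ‖L (v i)‖ ^ 2 ≤ ‖L‖ ^ 2 * ∑ i, c i * ‖v i‖ ^ 2 := by
  rw [Finset.mul_sum]
  refine Finset.sum_le_sum fun i _ => ?_
  calc c i * ‖L (v i)‖ ^ 2 ≤ c i * (‖L‖ * ‖v i‖) ^ 2 := by
        gcongr (c i * ?_ ^ 2)
        · exact hc i
        · exact L.le_opNorm _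
    _ = ‖L‖ ^ 2 * (c i * ‖v i‖ ^ 2) := by ring

end BlochBounded

lemma OrthonormalBasis.sum_sq_norm_inner_of_mem {H : Type*} [NormedAddCommGroup H]
    [InnerProductSpace ℂ H] {K : Submodule ℂ H} {ι : Type*} [Fintype ι]
    (b : OrthonormalBasis ι ℂ K) {x : H} (hx : x ∈ K) :
    ∑ k, ‖(inner ℂ (b k : H) x : ℂ)‖ ^ 2 = ‖x‖ ^ 2 :=
  b.sum_sq_norm_inner_right ⟨x, hx⟩

lemma OrthonormalBasis.sum_mul_sq_norm_eq_sum_sum_sq_norm_inner {H : Type*}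
    [NormedAddCommGroup H] [InnerProductSpace ℂ H] {K : Submodule ℂ H} {ι κ : Type*}
    [Fintype ι] [Fintype κ] (b : OrthonormalBasis ι ℂ K) (c : κ → ℝ) {v : κ → H}
    (hv : ∀ j, v j ∈ K) :
    ∑ j, c j * ‖v j‖ ^ 2 = ∑ k, ∑ j, c j * ‖(inner ℂ (b k : H) (v j) : ℂ)‖ ^ 2 := by
  simp_rw [← b.sum_sq_norm_inner_of_mem (hv _), Finset.mul_sum]
  exact Finset.sum_comm

namespace BlochDominated

variable {n m : ℕ} {lam zs : Fin n → ℂ} {mu ws : Fin m → ℂ}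

lemma sum_le_sum_of_hilbert {H : Type*} [NormedAddCommGroup H] [InnerProductSpace ℂ H]
    (hdom : BlochDominated lam zs mu ws)
    (hzs : ∀ i, zs i ∈ ball (0 : ℂ) 1) (hws : ∀ j, ws j ∈ ball (0 : ℂ) 1)
    {g : ℂ → H} (hg : DifferentiableOn ℂ g (ball (0 : ℂ) 1)) (hg0 : g 0 = 0)
    (hgb : IsBlochBounded g) :
    ∑ i, ‖lam i‖ ^ 2 * ‖deriv g (zs i)‖ ^ 2 ≤ ∑ j, ‖mu j‖ ^ 2 * ‖deriv g (ws j)‖ ^ 2 := by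
  have hgd : ∀ z ∈ ball (0 : ℂ) 1, DifferentiableAt ℂ g z := fun z hz =>
    hg.differentiableAt (isOpen_ball.mem_nhds hz)
  set K : Submodule ℂ H := Submodule.span ℂ
    (range (fun i => deriv g (zs i)) ∪ range (fun j => deriv g (ws j)))
  have : FiniteDimensional ℂ K :=
    FiniteDimensional.span_of_finite ℂ ((finite_range _).union (finite_range _))
  set b := stdOrthonormalBasis ℂ K
  have hcoord : ∀ k, ∑ i, ‖lam i‖ ^ 2 * ‖(inner ℂ (b k : H) (deriv g (zs i)) : ℂ)‖ ^ 2 ≤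
      ∑ j, ‖mu j‖ ^ 2 * ‖(inner ℂ (b k : H) (deriv g (ws j)) : ℂ)‖ ^ 2 := by
    intro k
    have hderiv : ∀ z ∈ ball (0 : ℂ) 1,
        deriv (fun w => innerSL ℂ (b k : H) (g w)) z = inner ℂ (b k : H) (deriv g z) :=
      fun z hz => deriv_clm_comp_apply _ (hgd z hz)
    have := hdom (fun w => innerSL ℂ (b k : H) (g w))
      ((innerSL ℂ (b k : H)).differentiable.comp_differentiableOn hg) (by simp [hg0])
      (hgb.clm_comp hg _)
    simpa only [hderiv _ (hzs _), hderiv _ (hws _)] using this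
  have hmem_z : ∀ i, deriv g (zs i) ∈ K := fun i => Submodule.subset_span (Or.inl ⟨i, rfl⟩)
  have hmem_w : ∀ j, deriv g (ws j) ∈ K := fun j => Submodule.subset_span (Or.inr ⟨j, rfl⟩)
  rw [b.sum_mul_sq_norm_eq_sum_sum_sq_norm_inner _ hmem_z,
    b.sum_mul_sq_norm_eq_sum_sum_sq_norm_inner _ hmem_w]
  exact Finset.sum_le_sum fun k _ => hcoord k

end BlochDominated

theorem stmt18_general {X H : Type*} [NormedAddCommGroup X] [NormedSpace ℂ X]
    [NormedAddCommGroup H] [InnerProductSpace ℂ H]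
    (f : ℂ → X) (g : ℂ → H) (hg : DifferentiableOn ℂ g (ball (0 : ℂ) 1)) (hg0 : g 0 = 0)
    (hgb : ∃ M, ∀ z ∈ ball (0 : ℂ) 1, (1 - ‖z‖ ^ 2) * ‖deriv g z‖ ≤ M)
    (T : H →L[ℂ] X) (hfact : ∀ z ∈ ball (0 : ℂ) 1, T (g z) = f z)
    (n m : ℕ) (lam : Fin n → ℂ) (zs : Fin n → ℂ) (hzs : ∀ i, zs i ∈ ball (0 : ℂ) 1)
    (mu : Fin m → ℂ) (ws : Fin m → ℂ) (hws : ∀ j, ws j ∈ ball (0 : ℂ) 1)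
    (hdom : ∀ h : ℂ → ℂ, DifferentiableOn ℂ h (ball (0 : ℂ) 1) → h 0 = 0 →
      (∃ M, ∀ z ∈ ball (0 : ℂ) 1, (1 - ‖z‖ ^ 2) * ‖deriv h z‖ ≤ M) →
      ∑ i, ‖lam i‖ ^ 2 * ‖deriv h (zs i)‖ ^ 2 ≤ ∑ j, ‖mu j‖ ^ 2 * ‖deriv h (ws j)‖ ^ 2) :
    ∑ i, ‖lam i‖ ^ 2 * ‖deriv f (zs i)‖ ^ 2 ≤
      ‖T‖ ^ 2 * blochSeminorm g ^ 2 * ∑ j, ‖mu j‖ ^ 2 / (1 - ‖ws j‖ ^ 2) ^ 2 := by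
  have hderiv_f : ∀ i, deriv f (zs i) = T (deriv g (zs i)) := fun i => by
    have hfg : f =ᶠ[nhds (zs i)] fun w => T (g w) := by
      filter_upwards [isOpen_ball.mem_nhds (hzs i)] with w hw using (hfact w hw).symm
    rw [hfg.deriv_eq,
      deriv_clm_comp_apply T (hg.differentiableAt (isOpen_ball.mem_nhds (hzs i)))]
  calc ∑ i, ‖lam i‖ ^ 2 * ‖deriv f (zs i)‖ ^ 2
      = ∑ i, ‖lam i‖ ^ 2 * ‖T (deriv g (zs i))‖ ^ 2 := by simp only [hderiv_f]
    _ ≤ ‖T‖ ^ 2 * ∑ i, ‖lam i‖ ^ 2 * ‖deriv g (zs i)‖ ^ 2 :=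
        T.sum_mul_sq_norm_apply_le (fun _ => by positivity) _
    _ ≤ ‖T‖ ^ 2 * ∑ j, ‖mu j‖ ^ 2 * ‖deriv g (ws j)‖ ^ 2 := by
        gcongr
        exact BlochDominated.sum_le_sum_of_hilbert hdom hzs hws hg hg0 hgb
    _ ≤ ‖T‖ ^ 2 * (blochSeminorm g ^ 2 * ∑ j, ‖mu j‖ ^ 2 / (1 - ‖ws j‖ ^ 2) ^ 2) := by
        gcongr
        exact IsBlochBounded.sum_mul_sq_norm_deriv_le hgb mu ws hws
    _ = _ := by ring

theorem stmt18 {X H : Type*} [NormedAddCommGroup X] [NormedSpace ℂ X] [CompleteSpace X]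
    [NormedAddCommGroup H] [InnerProductSpace ℂ H] [CompleteSpace H]
    (f : ℂ → X) (hf0 : f 0 = 0) (hf : DifferentiableOn ℂ f (ball (0 : ℂ) 1))
    (g : ℂ → H) (hg : DifferentiableOn ℂ g (ball (0 : ℂ) 1)) (hg0 : g 0 = 0)
    (hgb : ∃ M, ∀ z ∈ ball (0 : ℂ) 1, (1 - ‖z‖ ^ 2) * ‖deriv g z‖ ≤ M)
    (T : H →L[ℂ] X) (hfact : ∀ z ∈ ball (0 : ℂ) 1, T (g z) = f z)
    (n m : ℕ) (lam : Fin n → ℂ) (zs : Fin n → ℂ) (hzs : ∀ i, zs i ∈ ball (0 : ℂ) 1)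
    (mu : Fin m → ℂ) (ws : Fin m → ℂ) (hws : ∀ j, ws j ∈ ball (0 : ℂ) 1)
    (hdom : ∀ h : ℂ → ℂ, DifferentiableOn ℂ h (ball (0 : ℂ) 1) → h 0 = 0 →
      (∃ M, ∀ z ∈ ball (0 : ℂ) 1, (1 - ‖z‖ ^ 2) * ‖deriv h z‖ ≤ M) →
      ∑ i, ‖lam i‖ ^ 2 * ‖deriv h (zs i)‖ ^ 2 ≤ ∑ j, ‖mu j‖ ^ 2 * ‖deriv h (ws j)‖ ^ 2) :
    ∑ i, ‖lam i‖ ^ 2 * ‖deriv f (zs i)‖ ^ 2 ≤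
      ‖T‖ ^ 2 * blochSeminorm g ^ 2 * ∑ j, ‖mu j‖ ^ 2 / (1 - ‖ws j‖ ^ 2) ^ 2 :=
  stmt18_general f g hg hg0 hgb T hfact n m lam zs hzs mu ws hws hdom
end
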